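/- For Δ ∈ (0,1) and positive integer ℓ, the polynomial K_{Δ,ℓ}(x) = (2T_ℓ((1+Δ²−2x²)/(1−Δ²)) + 2)/(T_ℓ((1+Δ²)/(1−Δ²)) + 1) − 1 satisfies: (1) |K_{Δ,ℓ}(x)| ≤ 1 for all x ∈ [−1,1]; (2) K_{Δ,ℓ}(0) = 1; (3) for x ∈ [Δ,1], −1 ≤ K_{Δ,ℓ}(x) ≤ −1 + 4/(T_ℓ((1+Δ²)/(1−Δ²)) + 1). -/
import Mathlib

/-- Evaluation of the `ℓ`-th Chebyshev polynomial of the first kind. -/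
noncomputable def Tval (ℓ : ℕ) (z : ℝ) : ℝ := (Polynomial.Chebyshev.T ℝ ℓ).eval z

/-- The kernel-reflection polynomial `K_{Δ,ℓ}`. -/
noncomputable def Kpoly (Δ : ℝ) (ℓ : ℕ) (x : ℝ) : ℝ :=
  (2 * Tval ℓ ((1 + Δ ^ 2 - 2 * x ^ 2) / (1 - Δ ^ 2)) + 2) /
    (Tval ℓ ((1 + Δ ^ 2) / (1 - Δ ^ 2)) + 1) - 1

lemma T_cosh (n : ℕ) (t : ℝ) :
    (Polynomial.Chebyshev.T ℝ n).eval (Real.cosh t) = Real.cosh (n * t) := by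
  induction n using Nat.twoStepInduction with
  | zero => simp [Polynomial.Chebyshev.T_zero]
  | one => simp [Polynomial.Chebyshev.T_one]
  | more n ih0 ih1 =>
    have hidx : ((n + 2 : ℕ) : ℤ) = (n : ℤ) + 2 := by push_cast; ring
    rw [hidx, Polynomial.Chebyshev.T_add_two]
    have h1 : ((n + 1 : ℕ) : ℤ) = (n : ℤ) + 1 := by push_cast; ring
    rw [h1] at ih1
    simp only [Polynomial.eval_sub, Polynomial.eval_mul, Polynomial.eval_ofNat,
      Polynomial.eval_X, ih0, ih1]
    have ha := Real.cosh_add ((n + 1) * t) t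
    have hs := Real.cosh_sub ((n + 1) * t) t
    have e1 : ((n : ℝ) + 1) * t + t = ((n : ℝ) + 2) * t := by ring
    have e2 : ((n : ℝ) + 1) * t - t = (n : ℝ) * t := by ring
    rw [e1] at ha; rw [e2] at hs
    push_cast
    nlinarith [ha, hs]

lemma cosh_param {z : ℝ} (hz : 1 ≤ z) :
    Real.cosh (Real.log (z + Real.sqrt (z ^ 2 - 1))) = z := by
  set s := Real.sqrt (z ^ 2 - 1) with hs
  have hs0 : 0 ≤ s := Real.sqrt_nonneg _
  have hs2 : s ^ 2 = z ^ 2 - 1 := Real.sq_sqrt (by nlinarith)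
  have hpos : 0 < z + s := by nlinarith
  rw [Real.cosh_log hpos]
  have hinv : (z + s)⁻¹ = z - s := by
    rw [inv_eq_iff_eq_inv, eq_comm, inv_eq_iff_eq_inv, eq_comm] at *
    field_simp
    nlinarith
  rw [hinv]; ring

lemma Tval_ge_one (ℓ : ℕ) {z : ℝ} (hz : 1 ≤ z) : 1 ≤ Tval ℓ z := by
  have := cosh_param hz
  rw [Tval, ← this, T_cosh]
  exact Real.one_le_cosh _

lemma Tval_mono (ℓ : ℕ) {w z : ℝ} (hw : 1 ≤ w) (hwz : w ≤ z) : Tval ℓ w ≤ Tval ℓ z := by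
  have hz : 1 ≤ z := hw.trans hwz
  have hw2 : w ^ 2 - 1 ≤ z ^ 2 - 1 := by nlinarith
  have hsq : Real.sqrt (w ^ 2 - 1) ≤ Real.sqrt (z ^ 2 - 1) := Real.sqrt_le_sqrt hw2
  have hargpos : (0 : ℝ) < w + Real.sqrt (w ^ 2 - 1) := by
    have := Real.sqrt_nonneg (w ^ 2 - 1); nlinarith
  have hlog : Real.log (w + Real.sqrt (w ^ 2 - 1)) ≤ Real.log (z + Real.sqrt (z ^ 2 - 1)) :=
    Real.log_le_log hargpos (by linarith)
  have hlog0 : 0 ≤ Real.log (w + Real.sqrt (w ^ 2 - 1)) := by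
    apply Real.log_nonneg
    have := Real.sqrt_nonneg (w ^ 2 - 1); linarith
  rw [Tval, Tval, ← cosh_param hw, ← cosh_param hz, T_cosh, T_cosh]
  rw [Real.cosh_le_cosh]
  have hn : (0 : ℝ) ≤ (ℓ : ℝ) := Nat.cast_nonneg _
  have hlog0' : 0 ≤ Real.log (z + Real.sqrt (z ^ 2 - 1)) := hlog0.trans hlog
  rw [abs_of_nonneg (mul_nonneg hn hlog0), abs_of_nonneg (mul_nonneg hn hlog0')]
  exact mul_le_mul_of_nonneg_left hlog hn

lemma Tval_abs_le (ℓ : ℕ) {z : ℝ} (h1 : -1 ≤ z) (h2 : z ≤ 1) : |Tval ℓ z| ≤ 1 := by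
  have hz : z = Real.cos (Real.arccos z) := (Real.cos_arccos h1 h2).symm
  rw [Tval, hz, Polynomial.Chebyshev.T_real_cos]
  exact Real.abs_cos_le_one _

/-- properties of the kernel-reflection polynomial `K_{Δ,ℓ}`:
bounded by 1 in absolute value on `[-1,1]`, equal to 1 at 0, and on `[Δ,1]` it lies in
`[-1, -1 + 4/(T_ℓ((1+Δ²)/(1−Δ²)) + 1)]`. -/
theorem stmt8 (Δ : ℝ) (hΔ : Δ ∈ Set.Ioo (0 : ℝ) 1) (ℓ : ℕ) (hℓ : 0 < ℓ) :
    (∀ x ∈ Set.Icc (-1 : ℝ) 1, |Kpoly Δ ℓ x| ≤ 1) ∧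
    Kpoly Δ ℓ 0 = 1 ∧
    (∀ x ∈ Set.Icc Δ 1,
      -1 ≤ Kpoly Δ ℓ x ∧
      Kpoly Δ ℓ x ≤ -1 + 4 / (Tval ℓ ((1 + Δ ^ 2) / (1 - Δ ^ 2)) + 1)) := by
  obtain ⟨hΔ0, hΔ1⟩ := hΔ
  have hden : (0 : ℝ) < 1 - Δ ^ 2 := by nlinarith
  set M : ℝ := (1 + Δ ^ 2) / (1 - Δ ^ 2) with hM
  have hM1 : 1 ≤ M := by rw [hM, le_div_iff₀ hden]; nlinarith
  set D : ℝ := Tval ℓ M + 1 with hD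
  have hTM : 1 ≤ Tval ℓ M := Tval_ge_one ℓ hM1
  have hD2 : 2 ≤ D := by rw [hD]; linarith
  have hD0 : 0 < D := by linarith
  -- bounds in the mid region
  have mid : ∀ x : ℝ, Δ ^ 2 ≤ x ^ 2 → x ^ 2 ≤ 1 →
      -1 ≤ Kpoly Δ ℓ x ∧ Kpoly Δ ℓ x ≤ -1 + 4 / D := by
    intro x hx1 hx2
    set y : ℝ := (1 + Δ ^ 2 - 2 * x ^ 2) / (1 - Δ ^ 2) with hy
    have hy1 : y ≤ 1 := by rw [hy, div_le_one hden]; nlinarith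
    have hy2 : -1 ≤ y := by rw [hy, le_div_iff₀ hden]; nlinarith
    have hT := Tval_abs_le ℓ hy2 hy1
    rw [abs_le] at hT
    have hK : Kpoly Δ ℓ x = (2 * Tval ℓ y + 2) / D - 1 := rfl
    constructor
    · rw [hK, le_sub_iff_add_le, le_div_iff₀ hD0]; nlinarith [hT.1]
    · rw [hK, sub_le_iff_le_add, div_le_iff₀ hD0]
      have h4 : -1 + 4 / D + 1 = 4 / D := by ring
      rw [h4, div_mul_cancel₀ _ (ne_of_gt hD0)]
      nlinarith [hT.2]
  refine ⟨?_, ?_, ?_⟩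
  · intro x hx
    obtain ⟨hxl, hxr⟩ := hx
    by_cases hcase : Δ ^ 2 ≤ x ^ 2
    · have hx2 : x ^ 2 ≤ 1 := by nlinarith
      obtain ⟨hlo, hhi⟩ := mid x hcase hx2
      rw [abs_le]
      refine ⟨hlo, ?_⟩
      have : 4 / D ≤ 2 := by rw [div_le_iff₀ hD0]; linarith
      linarith
    · push_neg at hcase
      set y : ℝ := (1 + Δ ^ 2 - 2 * x ^ 2) / (1 - Δ ^ 2) with hy
      have hy1 : 1 ≤ y := by rw [hy, le_div_iff₀ hden]; nlinarith
      have hyM : y ≤ M := by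
        rw [hy, hM, div_le_div_iff₀ hden hden]; nlinarith [sq_nonneg x]
      have hT1 : 1 ≤ Tval ℓ y := Tval_ge_one ℓ hy1
      have hT2 : Tval ℓ y ≤ Tval ℓ M := Tval_mono ℓ hy1 hyM
      have hK : Kpoly Δ ℓ x = (2 * Tval ℓ y + 2) / D - 1 := rfl
      rw [abs_le]
      constructor
      · rw [hK, le_sub_iff_add_le, le_div_iff₀ hD0]; nlinarith
      · rw [hK, sub_le_iff_le_add, div_le_iff₀ hD0]; nlinarith
  · have h0 : (1 + Δ ^ 2 - 2 * (0 : ℝ) ^ 2) / (1 - Δ ^ 2) = M := by rw [hM]; ring_nf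
    have hK : Kpoly Δ ℓ 0 = (2 * Tval ℓ M + 2) / D - 1 := by
      rw [Kpoly, h0]
    rw [hK, hD]
    field_simp
    ring
  · intro x hx
    obtain ⟨hxl, hxr⟩ := hx
    have hx1 : Δ ^ 2 ≤ x ^ 2 := by nlinarith
    have hx2 : x ^ 2 ≤ 1 := by nlinarith
    exact mid x hx1 hx2
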